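/- Let D ⊆ ℤ and let X_D ⊆ {0,1}^ℤ be the orbit closure of the indicator function χ_D of D under the shift ℤ-action (σ^m ω)(i) = ω(i + m), i.e. X_D is the closure of {σ^m χ_D : m ∈ ℤ} in the product space {0,1}^ℤ. Then the following are equivalent: (1) the ℤ-system X_D is tame, i.e. for every continuous f : X_D → ℝ the family {x ↦ f(σ^m x) : m ∈ ℤ} contains no independent sequence; (2) for every infinite subset L ⊆ ℤ there exist an infinite subset K ⊆ L and a countable set Y of ultrafilters on ℤ such that for every ultrafilter x on ℤ there exists y ∈ Y with: for all n ∈ K, the set n + D := {n + d : d ∈ D} belongs to x if and only if it belongs to y. -/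

import Mathlib

open scoped Classical

/-- A sequence `(f n)` of real-valued functions, regarded on the subset `Z` of its
domain, is *independent on `Z`* if there are reals `a < b` such that for all disjoint
finite sets `P, M ⊆ ℕ` the set `Z ∩ ⋂_{n ∈ P} {f n < a} ∩ ⋂_{n ∈ M} {f n > b}`
is nonempty. -/
def IsIndependentSeqOn {W : Type*} (Z : Set W) (f : ℕ → W → ℝ) : Prop :=
  ∃ a b : ℝ, a < b ∧ ∀ P M : Finset ℕ, Disjoint P M →
    (Z ∩ (⋂ n ∈ P, {z | f n z < a}) ∩ ⋂ n ∈ M, {z | b < f n z}).Nonempty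

/-- The shift `σ^m` on `{0,1}^ℤ`: `(σ^m ω)(i) = ω (i + m)`. -/
def shiftZ (m : ℤ) (ω : ℤ → Bool) : ℤ → Bool := fun i => ω (i + m)

/-- The indicator function `χ_D : ℤ → {0,1}` of `D ⊆ ℤ`. -/
noncomputable def chiD (D : Set ℤ) : ℤ → Bool := fun i => decide (i ∈ D)

/-- The subshift `X_D ⊆ {0,1}^ℤ`: the orbit closure of `χ_D` under the shift. -/
noncomputable def XD (D : Set ℤ) : Set (ℤ → Bool) :=
  closure {ω | ∃ m : ℤ, ω = shiftZ m (chiD D)}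

/-!
Write `traces E K` for the set of traces `{c ∈ K | E c ∈ x}` of the ultrafilters `x`; condition
(2) says that every infinite `L ⊆ ℤ` contains an infinite `K` on which the translates `n + D` have
only countably many traces.

(1) ⇒ (2). Rosenthal's dichotomy, derived from the Nash-Williams theorem for the finite sets whose
alternating intersection is empty, applies to the sets `n + D`, `n ∈ L`. An independent
subsequence would make `ω ↦ ω 0` witness non-tameness; otherwise, along an infinite `K ⊆ L`, every
ultrafilter eventually contains or eventually omits `n + D`, so its trace on `K` is finite or
cofinite.

(2) ⇒ (1). An independent sequence `f ∘ σ^{m_n}` on `X_D` is already independent on the orbit of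
`χ_D`, so for every pattern `S ⊆ ℕ` some ultrafilter `x_S` on `ℤ` makes `f ∘ σ^{m_n + k}` small
along `x_S` for `n ∈ S` and large for `n ∉ S`. By uniform continuity `f` only sees a finite window
`W`, and `σ^{m_n + k} χ_D` on `W` is determined by which translates `-(w + m_n) + D` contain `k`.
Applying (2) once for each `w ∈ W` leaves countably many traces of these translates on a
subsequence of indices, so two of the continuum many `x_S` have the same trace, which is absurd at
an index lying in one pattern but not in the other.
-/

open Set Filter Function Topology

def IsInitialSegment (t : Finset ℕ) (S : Set ℕ) : Prop :=
  ↑t ⊆ S ∧ ∀ n ∈ S, n ∉ t → ∀ m ∈ t, m < n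

lemma IsInitialSegment.filter_lt_eq_image {q : ℕ → ℕ} (hq : StrictMono q) {t : Finset ℕ}
    (ht : IsInitialSegment t (range q)) {i : ℕ} (hi : q i ∈ t) :
    t.filter (· < q i) = (Finset.range i).image q := by
  ext m
  simp only [Finset.mem_filter, Finset.mem_image, Finset.mem_range]
  constructor
  · rintro ⟨hm, hlt⟩
    obtain ⟨j, rfl⟩ := ht.1 hm
    exact ⟨j, hq.lt_iff_lt.1 hlt, rfl⟩
  · rintro ⟨j, hj, rfl⟩
    refine ⟨?_, hq hj⟩
    by_contra hjt
    exact lt_asymm (hq hj) (ht.2 _ ⟨j, rfl⟩ hjt _ hi)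

lemma isInitialSegment_image_range {w : ℕ → ℕ} (hw : StrictMono w) (j : ℕ) :
    IsInitialSegment ((Finset.range j).image w) (range w) := by
  refine ⟨by rw [Finset.coe_image]; exact image_subset_range _ _, ?_⟩
  rintro _ ⟨k, rfl⟩ hk m hm
  obtain ⟨i, hi, rfl⟩ := Finset.mem_image.1 hm
  refine hw (lt_of_lt_of_le (Finset.mem_range.1 hi) (not_lt.1 fun hkj => hk ?_))
  exact Finset.mem_image_of_mem w (Finset.mem_range.2 hkj)

/-- The pattern `A t₀ ∩ (A t₁)ᶜ ∩ A t₂ ∩ ⋯` for `t = {t₀ < t₁ < t₂ < ⋯}`. -/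
def alternatingInter {α : Type*} (A : ℕ → Set α) (t : Finset ℕ) : Set α :=
  {z | ∀ n ∈ t, z ∈ A n ↔ Even (t.filter (· < n)).card}

lemma mem_alternatingInter_iff {α : Type*} {A : ℕ → Set α} {q : ℕ → ℕ} (hq : StrictMono q)
    {t : Finset ℕ} (ht : IsInitialSegment t (range q)) {z : α} :
    z ∈ alternatingInter A t ↔ ∀ i, q i ∈ t → (z ∈ A (q i) ↔ Even i) := by
  have hpos : ∀ i, q i ∈ t → (t.filter (· < q i)).card = i := fun i hi => by
    rw [ht.filter_lt_eq_image hq hi, Finset.card_image_of_injective _ hq.injective,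
      Finset.card_range]
  refine ⟨fun hz i hi => ?_, fun hz n hn => ?_⟩
  · have := hz _ hi
    rwa [hpos i hi] at this
  · obtain ⟨i, rfl⟩ := ht.1 hn
    rw [hpos i hn]
    exact hz i hn

namespace NashWilliams

def above (M : Set ℕ) (t : Finset ℕ) : Set ℕ := {r ∈ M | ∀ a ∈ t, a < r}

lemma above_empty (M : Set ℕ) : above M ∅ = M := by simp [above]

lemma above_insert (M : Set ℕ) (t : Finset ℕ) (n : ℕ) :
    above M (insert n t) = {r ∈ above M t | n < r} := by
  ext r
  simp only [above, Finset.forall_mem_insert, mem_ofPred_eq]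
  tauto

lemma infinite_above {M : Set ℕ} (hM : M.Infinite) (t : Finset ℕ) : (above M t).Infinite :=
  (hM.sdiff (finite_Iic (t.sup id))).mono fun _ hr =>
    ⟨hr.1, fun _ ha => (Finset.le_sup (f := id) ha).trans_lt (not_le.1 hr.2)⟩

section Fusion

variable {Φ : Finset ℕ → Set ℕ → Prop}

lemma exists_forall_mem_finset (hmono : ∀ s R R', R' ⊆ R → Φ s R → Φ s R')
    (hdense : ∀ s R, R.Infinite → ∃ R' ⊆ R, R'.Infinite ∧ Φ s R') (F : Finset (Finset ℕ))
    {R : Set ℕ} (hR : R.Infinite) : ∃ R' ⊆ R, R'.Infinite ∧ ∀ s ∈ F, Φ s R' := by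
  induction F using Finset.induction_on with
  | empty => exact ⟨R, subset_rfl, hR, by simp⟩
  | @insert s F _ ih =>
    obtain ⟨R₁, hR₁, hR₁i, hF⟩ := ih
    obtain ⟨R₂, hR₂, hR₂i, hs⟩ := hdense s R₁ hR₁i
    exact ⟨R₂, hR₂.trans hR₁, hR₂i,
      (Finset.forall_mem_insert _ _ _).2 ⟨hs, fun t ht => hmono t R₁ R₂ hR₂ (hF t ht)⟩⟩

/-- Diagonal fusion: `R_{k+1} ⊆ R_k` is chosen beyond the least element `m_k` of `R_k` so as to
satisfy `Φ t` for every `t ⊆ {0, …, m_k}`, and `M = {m_0 < m_1 < ⋯}`. -/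
theorem exists_forall_above (hmono : ∀ s R R', R' ⊆ R → Φ s R → Φ s R')
    (hdense : ∀ s R, R.Infinite → ∃ R' ⊆ R, R'.Infinite ∧ Φ s R') {L : Set ℕ}
    (hL : L.Infinite) : ∃ M ⊆ L, M.Infinite ∧ ∀ t : Finset ℕ, ↑t ⊆ M → Φ t (above M t) := by
  obtain ⟨R₀, hR₀L, hR₀, hΦ₀⟩ := hdense ∅ L hL
  choose next hnext hnexti hnextΦ using fun R : {R : Set ℕ // R.Infinite} =>
    exists_forall_mem_finset hmono hdense (Finset.range (sInf R.1 + 1)).powerset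
      (R.2.sdiff (finite_Iic (sInf R.1)))
  let R : ℕ → {R : Set ℕ // R.Infinite} := fun k =>
    Nat.rec ⟨R₀, hR₀⟩ (fun _ R => ⟨next R, hnexti R⟩) k
  let m : ℕ → ℕ := fun k => sInf (R k).1
  have hRsucc : ∀ k, (R (k + 1)).1 ⊆ (R k).1 \ Iic (m k) := fun k => hnext (R k)
  have hm : ∀ k, m k ∈ (R k).1 := fun k => Nat.sInf_mem (R k).2.nonempty
  have hanti : Antitone fun k => (R k).1 :=
    antitone_nat_of_succ_le fun k => (hRsucc k).trans sdiff_subset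
  have hmono_m : StrictMono m :=
    strictMono_nat_of_lt_succ fun k => not_le.1 (hRsucc k (hm (k + 1))).2
  have hmR : ∀ {k j}, k ≤ j → m j ∈ (R k).1 := fun hkj => hanti hkj (hm _)
  have hMR₀ : range m ⊆ R₀ := range_subset_iff.2 fun j => hmR (Nat.zero_le j)
  refine ⟨range m, hMR₀.trans hR₀L, infinite_range_of_injective hmono_m.injective,
    fun t ht => ?_⟩
  rcases t.eq_empty_or_nonempty with rfl | hne
  · rw [above_empty]
    exact hmono _ _ _ hMR₀ hΦ₀
  · obtain ⟨k, hk⟩ := ht (t.max'_mem hne)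
    refine hmono _ _ _ ?_ (hnextΦ (R k) t (Finset.mem_powerset.2 fun a ha =>
      Finset.mem_range.2 (Nat.lt_succ_of_le ((t.le_max' a ha).trans_eq hk.symm))))
    rintro _ ⟨⟨j, rfl⟩, hj⟩
    exact hmR (k := k + 1) (hmono_m.lt_iff_lt.1 (hk ▸ hj _ (t.max'_mem hne)))

end Fusion

variable {B : Finset ℕ → Prop}

variable (B) in
def Accepts (s : Finset ℕ) (R : Set ℕ) : Prop :=
  ∀ S ⊆ R, S.Infinite → ∃ t, IsInitialSegment t (↑s ∪ S) ∧ B t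

variable (B) in
def Rejects (s : Finset ℕ) (R : Set ℕ) : Prop :=
  ∀ R' ⊆ R, R'.Infinite → ¬ Accepts B s R'

lemma Accepts.mono {s : Finset ℕ} {R R' : Set ℕ} (h : Accepts B s R) (hR : R' ⊆ R) :
    Accepts B s R' :=
  fun S hS => h S (hS.trans hR)

lemma Rejects.mono {s : Finset ℕ} {R R' : Set ℕ} (h : Rejects B s R) (hR : R' ⊆ R) :
    Rejects B s R' :=
  fun R'' hR'' => h R'' (hR''.trans hR)

lemma exists_accepts_or_rejects (s : Finset ℕ) {R : Set ℕ} (hR : R.Infinite) :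
    ∃ R' ⊆ R, R'.Infinite ∧ (Accepts B s R' ∨ Rejects B s R') := by
  by_cases h : ∃ R' ⊆ R, R'.Infinite ∧ Accepts B s R'
  · obtain ⟨R', hR', hR'i, hacc⟩ := h
    exact ⟨R', hR', hR'i, Or.inl hacc⟩
  · exact ⟨R, subset_rfl, hR, Or.inr fun R' hR' hR'i hacc => h ⟨R', hR', hR'i, hacc⟩⟩

/-- Otherwise these `n` would form a set accepting `s`: an infinite `S` of them is
`{min S} ∪ (S \ {min S})`. -/
lemma Rejects.finite_setOf_accepts_insert {s : Finset ℕ} {R : Set ℕ} (h : Rejects B s R) :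
    {n ∈ R | Accepts B (insert n s) {r ∈ R | n < r}}.Finite := by
  by_contra hinf
  refine h _ (fun n hn => hn.1) hinf fun S hS hSi => ?_
  have hn : sInf S ∈ S := Nat.sInf_mem hSi.nonempty
  obtain ⟨t, ht, hB⟩ := (hS hn).2 (S \ {sInf S})
    (fun r hr => ⟨(hS hr.1).1, lt_of_le_of_ne (Nat.sInf_le hr.1) fun e => hr.2 e.symm⟩)
    (hSi.sdiff (finite_singleton _))
  rw [Finset.coe_insert, insert_union, ← union_insert, insert_sdiff_singleton,
    insert_eq_of_mem hn] at ht
  exact ⟨t, ht, hB⟩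

lemma accepts_above {t : Finset ℕ} (hB : B t) (M : Set ℕ) : Accepts B t (above M t) :=
  fun _ hS _ =>
    ⟨t, ⟨subset_union_left, fun _ hn hnt _ hm => (hS (hn.resolve_left hnt)).2 _ hm⟩, hB⟩

/-- A rejected `s` stays rejected after adding any but finitely many `n`
(`Rejects.finite_setOf_accepts_insert`); the fusion discards the exceptions. -/
lemma exists_forall_rejects_above {M : Set ℕ} (hM : M.Infinite)
    (hdec : ∀ t : Finset ℕ, ↑t ⊆ M → Accepts B t (above M t) ∨ Rejects B t (above M t))
    (hrej : Rejects B ∅ M) :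
    ∃ N ⊆ M, N.Infinite ∧ ∀ t : Finset ℕ, ↑t ⊆ N → Rejects B t (above M t) := by
  have hdense : ∀ (s : Finset ℕ) (R : Set ℕ), R.Infinite → ∃ R' ⊆ R, R'.Infinite ∧
      (↑s ⊆ M → Rejects B s (above M s) →
        ∀ n ∈ R', n ∈ above M s → Rejects B (insert n s) (above M (insert n s))) := by
    intro s R hR
    by_cases hs : ↑s ⊆ M ∧ Rejects B s (above M s)
    · have hbad : {n ∈ above M s | ¬ Rejects B (insert n s) (above M (insert n s))}.Finite := by
        refine hs.2.finite_setOf_accepts_insert.subset fun n ⟨hn, hnrej⟩ => ⟨hn, ?_⟩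
        have hdec' := hdec (insert n s) (by rw [Finset.coe_insert]; exact insert_subset hn.1 hs.1)
        rw [above_insert] at hdec' hnrej
        exact hdec'.resolve_right hnrej
      exact ⟨R \ _, sdiff_subset, hR.sdiff hbad,
        fun _ _ n hn hnM => not_not.1 fun h => hn.2 ⟨hnM, h⟩⟩
    · exact ⟨R, subset_rfl, hR, fun h₁ h₂ => absurd ⟨h₁, h₂⟩ hs⟩
  obtain ⟨N, hNM, hN, hext⟩ := exists_forall_above
    (fun _ _ _ h hΦ hs hrej n hn => hΦ hs hrej n (h hn)) hdense hM
  refine ⟨N, hNM, hN, fun t => Finset.induction_on_max t (fun _ => (above_empty M).symm ▸ hrej)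
    fun n t hlt ih ht => ?_⟩
  rw [Finset.coe_insert, insert_subset_iff] at ht
  exact hext t ht.2 (ht.2.trans hNM) (ih ht.2) n ⟨ht.1, hlt⟩ ⟨hNM ht.1, hlt⟩

end NashWilliams

open NashWilliams in
theorem nash_williams_dichotomy (B : Finset ℕ → Prop) {L : Set ℕ} (hL : L.Infinite) :
    ∃ M ⊆ L, M.Infinite ∧ ((∀ S ⊆ M, S.Infinite → ∃ t, IsInitialSegment t S ∧ B t) ∨
      ∀ t : Finset ℕ, ↑t ⊆ M → ¬ B t) := by
  obtain ⟨M, hML, hM, hdec⟩ := exists_forall_above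
    (Φ := fun s R => Accepts B s R ∨ Rejects B s R)
    (fun _ _ _ h => Or.imp (Accepts.mono · h) (Rejects.mono · h))
    (fun s _ hR => exists_accepts_or_rejects s hR) hL
  rcases above_empty M ▸ hdec ∅ (by simp) with hacc | hrej
  · exact ⟨M, hML, hM, Or.inl fun S hS hSi => by simpa using hacc S hS hSi⟩
  obtain ⟨N, hNM, hN, hrejN⟩ := exists_forall_rejects_above hM hdec hrej
  exact ⟨N, hNM.trans hML, hN, Or.inr fun t ht hB =>
    hrejN t ht _ subset_rfl (infinite_above hM t) (accepts_above hB M)⟩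

lemma Ultrafilter.setOf_mem_iff_mem {α : Type*} (x : Ultrafilter α) (s : Set α) :
    {z | z ∈ s ↔ s ∈ x} ∈ x := by
  by_cases hs : s ∈ x
  · exact mem_of_superset hs fun z hz => iff_of_true hz hs
  · exact mem_of_superset (x.compl_mem_iff_notMem.2 hs) fun z hz => iff_of_false hz hs

lemma Ultrafilter.exists_forall_mem_of_independent {α : Type*} {A B : ℕ → Set α}
    (h : ∀ P Q : Finset ℕ, Disjoint P Q → ((⋂ n ∈ P, A n) ∩ ⋂ n ∈ Q, B n).Nonempty)
    (S : Set ℕ) : ∃ x : Ultrafilter α, (∀ n ∈ S, A n ∈ x) ∧ ∀ n ∉ S, B n ∈ x := by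
  set C : ℕ → Set α := fun n => if n ∈ S then A n else B n
  have : (⨅ n, 𝓟 (C n)).NeBot := (hasBasis_iInf_principal_finite C).neBot_iff.2 fun {T} hT => by
    obtain ⟨z, hzP, hzQ⟩ := h (hT.toFinset.filter (· ∈ S)) (hT.toFinset.filter (· ∉ S))
      (Finset.disjoint_filter_filter_not _ _ _)
    refine ⟨z, mem_iInter₂.2 fun n hn => ?_⟩
    by_cases hnS : n ∈ S
    · simpa [C, hnS] using mem_iInter₂.1 hzP n (by simpa [hnS] using hn)
    · simpa [C, hnS] using mem_iInter₂.1 hzQ n (by simpa [hnS] using hn)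
  have hC : ∀ n, C n ∈ Ultrafilter.of (⨅ n, 𝓟 (C n)) := fun n =>
    Ultrafilter.of_le _ (mem_iInf_of_mem n (mem_principal_self _))
  exact ⟨_, fun n hn => by simpa [C, hn] using hC n, fun n hn => by simpa [C, hn] using hC n⟩

section Rosenthal

variable {α : Type*} {A : ℕ → Set α}

lemma finite_or_finite_of_forall_exists_isInitialSegment {M : Set ℕ}
    (h : ∀ S ⊆ M, S.Infinite → ∃ t, IsInitialSegment t S ∧ alternatingInter A t = ∅)
    (x : Ultrafilter α) : {n ∈ M | A n ∈ x}.Finite ∨ {n ∈ M | A n ∉ x}.Finite := by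
  by_contra! hinf
  obtain ⟨q, hq, hqM⟩ := extraction_forall_of_frequently
    (P := fun i n => n ∈ M ∧ (A n ∈ x ↔ Even i)) fun i => Nat.frequently_atTop_iff_infinite.2 <| by
      by_cases hi : Even i
      · simpa [hi] using hinf.1
      · simpa [hi] using hinf.2
  obtain ⟨t, ht, hempty⟩ := h (range q) (range_subset_iff.2 fun i => (hqM i).1)
    (infinite_range_of_injective hq.injective)
  have hmem : alternatingInter A t ∈ x :=
    mem_of_superset ((biInter_finset_mem t).2 fun n _ => x.setOf_mem_iff_mem (A n)) fun z hz =>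
      (mem_alternatingInter_iff hq ht).2 fun i hi => (mem_iInter₂.1 hz (q i) hi).trans (hqM i).2
  exact x.empty_notMem (hempty ▸ hmem)

/-- For `k ∈ P` the pair `u (3k+1), u (3k+2)` puts `u (3k+1)` in an even position of the
alternating pattern, for `k ∉ P` the pair `u (3k), u (3k+1)` puts it in an odd one. -/
lemma exists_strictMono_independent_of_forall_ne_empty {M : Set ℕ} (hM : M.Infinite)
    (h : ∀ t : Finset ℕ, ↑t ⊆ M → ¬ alternatingInter A t = ∅) :
    ∃ φ : ℕ → ℕ, StrictMono φ ∧ ∀ P Q : Finset ℕ, Disjoint P Q →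
      ((⋂ n ∈ P, A (φ n)) ∩ ⋂ n ∈ Q, (A (φ n))ᶜ).Nonempty := by
  set u := Nat.nth (· ∈ M)
  have hu : StrictMono u := Nat.nth_strictMono hM
  refine ⟨fun k => u (3 * k + 1), hu.comp fun a b hab => by omega, fun P Q hPQ => ?_⟩
  set K := (P ∪ Q).sup id + 1
  set w : ℕ → ℕ := fun i => u (3 * (i / 2) + i % 2 + if i / 2 ∈ P then 1 else 0)
  have hw : StrictMono w := strictMono_nat_of_lt_succ fun i => hu <| by
    obtain ⟨k, rfl | rfl⟩ := Nat.even_or_odd' i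
    · rw [show (2 * k + 1) / 2 = 2 * k / 2 by omega]
      split_ifs <;> omega
    · split_ifs <;> omega
  have hwM : ↑((Finset.range (2 * K)).image w) ⊆ M := by
    rw [Finset.coe_image]
    rintro _ ⟨i, -, rfl⟩
    exact Nat.nth_mem_of_infinite hM _
  obtain ⟨z, hz⟩ := nonempty_iff_ne_empty.2 (h _ hwM)
  have hz' := (mem_alternatingInter_iff hw (isInitialSegment_image_range hw _)).1 hz
  have hwK : ∀ i < 2 * K, w i ∈ (Finset.range (2 * K)).image w := fun i hi =>
    Finset.mem_image_of_mem w (Finset.mem_range.2 hi)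
  have hK : ∀ k ∈ P ∪ Q, k < K := fun k hk => Nat.lt_succ_of_le (Finset.le_sup (f := id) hk)
  refine ⟨z, mem_iInter₂.2 fun k hk => ?_, mem_iInter₂.2 fun k hk => ?_⟩
  · have hwk : w (2 * k) = u (3 * k + 1) := by
      simp only [w, if_pos (show 2 * k / 2 ∈ P by rwa [Nat.mul_div_cancel_left k two_pos])]
      congr 1
      omega
    have := (hz' (2 * k) (hwK _ (by have := hK k (Finset.mem_union_left Q hk); omega))).2
      (even_two_mul k)
    rwa [hwk] at this
  · have hkP : k ∉ P := Finset.disjoint_right.1 hPQ hk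
    have hwk : w (2 * k + 1) = u (3 * k + 1) := by
      simp only [w, if_neg (show (2 * k + 1) / 2 ∉ P by rwa [show (2 * k + 1) / 2 = k by omega])]
      congr 1
      omega
    have := hz' (2 * k + 1) (hwK _ (by have := hK k (Finset.mem_union_right P hk); omega))
    rw [hwk] at this
    exact fun hzk => Nat.not_even_two_mul_add_one k (this.1 hzk)

theorem rosenthal_dichotomy (A : ℕ → Set α) :
    (∃ φ : ℕ → ℕ, StrictMono φ ∧ ∀ P Q : Finset ℕ, Disjoint P Q →
      ((⋂ n ∈ P, A (φ n)) ∩ ⋂ n ∈ Q, (A (φ n))ᶜ).Nonempty) ∨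
    ∃ I : Set ℕ, I.Infinite ∧
      ∀ x : Ultrafilter α, {n ∈ I | A n ∈ x}.Finite ∨ {n ∈ I | A n ∉ x}.Finite := by
  obtain ⟨M, -, hM, hM'⟩ :=
    nash_williams_dichotomy (fun t => alternatingInter A t = ∅) infinite_univ
  exact hM'.elim (fun h => Or.inr ⟨M, hM, finite_or_finite_of_forall_exists_isInitialSegment h⟩)
    fun h => Or.inl (exists_strictMono_independent_of_forall_ne_empty hM h)

end Rosenthal

section Traces

variable {α ι : Type*}

def traces (E : ι → Set α) (K : Set ι) : Set (Set ι) :=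
  range fun x : Ultrafilter α => {c ∈ K | E c ∈ x}

variable {E : ι → Set α} {K K' : Set ι}

lemma countable_traces_iff : (traces E K).Countable ↔
    ∃ Y : Set (Ultrafilter α), Y.Countable ∧
      ∀ x : Ultrafilter α, ∃ y ∈ Y, ∀ c ∈ K, (E c ∈ x ↔ E c ∈ y) := by
  constructor
  · intro h
    have := h.to_subtype
    refine ⟨range fun T : traces E K => T.2.choose, countable_range _, fun x =>
      ⟨_, mem_range_self ⟨_, x, rfl⟩, fun c hc => ?_⟩⟩
    have hy := (⟨_, x, rfl⟩ : traces E K).2.choose_spec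
    simpa [hc] using (Set.ext_iff.1 hy c).symm
  · rintro ⟨Y, hY, hxY⟩
    refine (hY.image fun y => {c ∈ K | E c ∈ y}).mono ?_
    rintro _ ⟨x, rfl⟩
    obtain ⟨y, hy, hxy⟩ := hxY x
    exact ⟨y, hy, ext fun c => and_congr_right fun hc => (hxy c hc).symm⟩

lemma countable_traces_of_subset (h : K' ⊆ K) (hK : (traces E K).Countable) :
    (traces E K').Countable :=
  (hK.image (· ∩ K')).mono <| by
    rintro _ ⟨x, rfl⟩
    refine ⟨_, ⟨x, rfl⟩, ext fun c => ?_⟩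
    simp only [mem_inter_iff, mem_ofPred_eq]
    exact ⟨fun ⟨⟨_, hx⟩, hc⟩ => ⟨hc, hx⟩, fun ⟨hc, hx⟩ => ⟨⟨h hc, hx⟩, hc⟩⟩

lemma countable_traces_union (hK : (traces E K).Countable) (hK' : (traces E K').Countable) :
    (traces E (K ∪ K')).Countable :=
  (hK.image2 hK' (· ∪ ·)).mono <| by
    rintro _ ⟨x, rfl⟩
    exact ⟨_, ⟨x, rfl⟩, _, ⟨x, rfl⟩, ext fun c => or_and_right.symm⟩

lemma countable_traces_image {κ : Type*} {e : κ → ι} {I : Set κ}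
    (h : (traces (E ∘ e) I).Countable) : (traces E (e '' I)).Countable :=
  (h.image (e '' ·)).mono <| by
    rintro _ ⟨x, rfl⟩
    refine ⟨_, ⟨x, rfl⟩, ext fun c => ⟨?_, ?_⟩⟩
    · rintro ⟨n, ⟨hn, hx⟩, rfl⟩
      exact ⟨⟨n, hn, rfl⟩, hx⟩
    · rintro ⟨⟨n, hn, rfl⟩, hx⟩
      exact ⟨n, ⟨hn, hx⟩, rfl⟩

lemma countable_traces_of_finite_or_finite [Countable ι] {I : Set ι}
    (h : ∀ x : Ultrafilter α, {n ∈ I | E n ∈ x}.Finite ∨ {n ∈ I | E n ∉ x}.Finite) :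
    (traces E I).Countable := by
  have hfin : {T : Set ι | T.Finite}.Countable := by
    simpa using countable_ofPred_finite_subset (countable_univ (α := ι))
  refine (hfin.union (hfin.image (I \ ·))).mono ?_
  rintro _ ⟨x, rfl⟩
  refine (h x).imp id fun hc => ⟨_, hc, ext fun n => ?_⟩
  simp only [Set.mem_sdiff, mem_ofPred_eq, not_and, not_not]
  exact ⟨fun ⟨hn, hx⟩ => ⟨hn, hx hn⟩, fun ⟨hn, hx⟩ => ⟨hn, fun _ => hx⟩⟩

lemma exists_infinite_countable_traces_biUnion {κ : Type*}
    (h : ∀ L : Set ι, L.Infinite → ∃ K ⊆ L, K.Infinite ∧ (traces E K).Countable)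
    {e : κ → ℕ → ι} (he : ∀ w, Injective (e w)) (V : Finset κ) :
    ∃ N : Set ℕ, N.Infinite ∧ (traces E (⋃ w ∈ V, e w '' N)).Countable := by
  induction V using Finset.induction_on with
  | empty => exact ⟨univ, infinite_univ, (countable_singleton ∅).mono (by rintro _ ⟨x, rfl⟩; simp)⟩
  | @insert w V _ ih =>
    obtain ⟨N, hN, hNc⟩ := ih
    obtain ⟨K, hKN, hK, hKc⟩ := h _ (hN.image (he w).injOn)
    refine ⟨N ∩ e w ⁻¹' K, (hK.mono fun c hc => ?_).of_image (e w), ?_⟩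
    · obtain ⟨n, hn, rfl⟩ := hKN hc
      exact ⟨n, ⟨hn, hc⟩, rfl⟩
    · rw [Finset.set_biUnion_insert]
      refine countable_traces_of_subset (union_subset_union ?_ ?_) (countable_traces_union hKc hNc)
      · rintro _ ⟨n, hn, rfl⟩
        exact hn.2
      · exact iUnion₂_mono fun w _ => image_mono inter_subset_left

end Traces

lemma exists_mem_notMem_eq_of_countable_range {β : Type*} {φ : Set ℕ → β}
    (h : (range φ).Countable) : ∃ S S' : Set ℕ, ∃ i ∈ S, i ∉ S' ∧ φ S = φ S' := by
  by_contra! hφ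
  have hinj : Injective φ := fun S S' e => ext fun i =>
    ⟨fun hi => not_not.1 fun hi' => hφ S S' i hi hi' e,
      fun hi => not_not.1 fun hi' => hφ S' S i hi hi' e.symm⟩
  have := h.to_subtype
  obtain ⟨g, hg⟩ := exists_injective_nat (range φ)
  exact cantor_injective _ (hg.comp (f := rangeFactorization φ) fun S S' e =>
    hinj (congrArg Subtype.val e))

lemma UniformContinuousOn.exists_finset_forall_dist_lt {ι X β : Type*} [UniformSpace X]
    [DiscreteUniformity X] [PseudoMetricSpace β] {f : (ι → X) → β} {K : Set (ι → X)}
    (hf : UniformContinuousOn f K)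
    {ε : ℝ} (hε : 0 < ε) :
    ∃ W : Finset ι, ∀ ω ∈ K, ∀ ω' ∈ K, (∀ i ∈ W, ω i = ω' i) → dist (f ω) (f ω') < ε := by
  have hU := mem_inf_principal.1 (hf (Metric.dist_mem_uniformity hε))
  simp only [Pi.uniformity, DiscreteUniformity.eq_principal_setRelId, comap_principal] at hU
  obtain ⟨I, hI, hIU⟩ := (hasBasis_iInf_principal_finite _).mem_iff.1 hU
  exact ⟨hI.toFinset, fun ω hω ω' hω' hW =>
    @hIU (ω, ω') (mem_iInter₂.2 fun i hi => hW i (hI.mem_toFinset.2 hi)) ⟨hω, hω'⟩⟩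

section Independence

variable {W : Type*} {Z : Set W} {f : ℕ → W → ℝ}

lemma IsIndependentSeqOn.injective (h : IsIndependentSeqOn Z f) : Injective f := by
  obtain ⟨a, b, hab, h⟩ := h
  intro n n' hnn'
  by_contra hne
  obtain ⟨z, ⟨-, hz⟩, hz'⟩ := h {n} {n'} (Finset.disjoint_singleton.2 hne)
  have h₁ : f n z < a := by simpa using hz
  have h₂ : b < f n' z := by simpa using hz'
  rw [hnn'] at h₁
  linarith

lemma IsIndependentSeqOn.of_closure [TopologicalSpace W] {Y : Set W}
    (hf : ∀ n, ContinuousOn (f n) (closure Y)) (h : IsIndependentSeqOn (closure Y) f) :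
    IsIndependentSeqOn Y f := by
  obtain ⟨a, b, hab, h⟩ := h
  refine ⟨a, b, hab, fun P M hPM => ?_⟩
  obtain ⟨z, ⟨hz, hzP⟩, hzM⟩ := h P M hPM
  have hU : (⋂ n ∈ P, {z | f n z < a}) ∩ ⋂ n ∈ M, {z | b < f n z} ∈ 𝓝[closure Y] z :=
    inter_mem
      ((biInter_finset_mem P).2 fun n hn => hf n z hz (Iio_mem_nhds (mem_iInter₂.1 hzP n hn)))
      ((biInter_finset_mem M).2 fun n hn => hf n z hz (Ioi_mem_nhds (mem_iInter₂.1 hzM n hn)))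
  obtain ⟨y, hy, hyY⟩ := (mem_closure_iff_nhdsWithin_neBot.1 hz).nonempty_of_mem
    (inter_mem (nhdsWithin_mono z subset_closure hU) self_mem_nhdsWithin)
  exact ⟨y, ⟨hyY, hy.1⟩, hy.2⟩

end Independence

section Subshift

variable (D : Set ℤ)

def translates (c : ℤ) : Set ℤ := (fun d => c + d) '' D

variable {D} in
lemma mem_translates {c z : ℤ} : z ∈ translates D c ↔ -c + z ∈ D := by
  rw [translates, image_add_left]
  rfl

lemma shiftZ_shiftZ (a b : ℤ) (ω : ℤ → Bool) : shiftZ a (shiftZ b ω) = shiftZ (a + b) ω :=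
  funext fun i => congrArg ω (add_assoc i a b)

lemma continuous_shiftZ (m : ℤ) : Continuous (shiftZ m) :=
  continuous_pi fun i => continuous_apply (i + m)

lemma shiftZ_chiD_mem_XD (k : ℤ) : shiftZ k (chiD D) ∈ XD D :=
  subset_closure ⟨k, rfl⟩

lemma mapsTo_shiftZ_XD (m : ℤ) : MapsTo (shiftZ m) (XD D) (XD D) :=
  MapsTo.closure (fun _ ⟨k, hk⟩ => ⟨m + k, by rw [hk, shiftZ_shiftZ]⟩) (continuous_shiftZ m)

lemma isIndependentSeqOn_XD_of_translates {c : ℕ → ℤ}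
    (h : ∀ P Q : Finset ℕ, Disjoint P Q →
      ((⋂ n ∈ P, translates D (c n)) ∩ ⋂ n ∈ Q, (translates D (c n))ᶜ).Nonempty) :
    IsIndependentSeqOn (XD D) fun n ω => if shiftZ (-c n) ω 0 then (1 : ℝ) else 0 := by
  refine ⟨1 / 3, 2 / 3, by norm_num, fun P Q hPQ => ?_⟩
  obtain ⟨z, hzQ, hzP⟩ := h Q P hPQ.symm
  have hval : ∀ n, shiftZ (-c n) (shiftZ z (chiD D)) 0 = decide (z ∈ translates D (c n)) :=
    fun n => by simp [shiftZ, chiD, mem_translates]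
  refine ⟨shiftZ z (chiD D), ⟨shiftZ_chiD_mem_XD D z, mem_iInter₂.2 fun n hn => ?_⟩,
    mem_iInter₂.2 fun n hn => ?_⟩
  · have hz : z ∉ translates D (c n) := mem_iInter₂.1 hzP n hn
    simp only [mem_ofPred_eq, hval, hz, decide_false]
    norm_num
  · have hz : z ∈ translates D (c n) := mem_iInter₂.1 hzQ n hn
    simp only [mem_ofPred_eq, hval, hz, decide_true]
    norm_num

theorem exists_countable_traces_of_tame
    (htame : ∀ f : (ℤ → Bool) → ℝ, ContinuousOn f (XD D) →
      ¬ ∃ m : ℕ → ℤ, IsIndependentSeqOn (XD D) fun n ω => f (shiftZ (m n) ω))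
    {L : Set ℤ} (hL : L.Infinite) :
    ∃ K ⊆ L, K.Infinite ∧ (traces (translates D) K).Countable := by
  set e : ℕ → ℤ := fun n => Set.Infinite.natEmbedding L hL n
  have he : Injective e := fun a b hab =>
    (Set.Infinite.natEmbedding L hL).injective (Subtype.ext hab)
  rcases rosenthal_dichotomy (translates D ∘ e) with ⟨φ, -, hφ⟩ | ⟨I, hI, hconv⟩
  · exact (htame (fun ω => if ω 0 then 1 else 0)
      ((continuous_of_discreteTopology (f := fun b : Bool => if b then (1 : ℝ) else 0)).comp
        (continuous_apply 0)).continuousOn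
      ⟨fun n => -e (φ n), isIndependentSeqOn_XD_of_translates D (c := fun n => e (φ n)) hφ⟩).elim
  · exact ⟨e '' I, image_subset_iff.2 fun n _ => (Set.Infinite.natEmbedding L hL n).2,
      hI.image he.injOn, countable_traces_image (countable_traces_of_finite_or_finite hconv)⟩

lemma exists_mem_mem_forall_shiftZ_eq {x y : Ultrafilter ℤ} {c : ℤ} {W : Finset ℤ}
    (hxy : ∀ w ∈ W, (translates D (-(w + c)) ∈ x ↔ translates D (-(w + c)) ∈ y))
    {s s' : Set ℤ} (hs : s ∈ x) (hs' : s' ∈ y) :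
    ∃ k ∈ s, ∃ k' ∈ s', ∀ w ∈ W, shiftZ (c + k) (chiD D) w = shiftZ (c + k') (chiD D) w := by
  have hmem : ∀ z : Ultrafilter ℤ,
      {k | ∀ w ∈ W, k ∈ translates D (-(w + c)) ↔ translates D (-(w + c)) ∈ z} ∈ z := fun z =>
    mem_of_superset ((biInter_finset_mem W).2 fun w _ => z.setOf_mem_iff_mem _) fun _ hk =>
      mem_iInter₂.1 hk
  obtain ⟨k, hk, hkx⟩ := x.nonempty_of_mem (inter_mem hs (hmem x))
  obtain ⟨k', hk', hky⟩ := y.nonempty_of_mem (inter_mem hs' (hmem y))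
  have hval : ∀ w j, shiftZ (c + j) (chiD D) w = decide (j ∈ translates D (-(w + c))) :=
    fun w j => by simp only [shiftZ, chiD, mem_translates, neg_neg, add_assoc]
  refine ⟨k, hk, k', hk', fun w hw => ?_⟩
  rw [hval, hval, decide_eq_decide]
  exact (hkx w hw).trans ((hxy w hw).trans (hky w hw).symm)

lemma not_forall_translates_mem_iff {f : (ℤ → Bool) → ℝ} {a b : ℝ} {W : Finset ℤ}
    (hW : ∀ ω ∈ XD D, ∀ ω' ∈ XD D, (∀ w ∈ W, ω w = ω' w) → dist (f ω) (f ω') < b - a)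
    {x y : Ultrafilter ℤ} {c : ℤ} (hx : {k | f (shiftZ (c + k) (chiD D)) < a} ∈ x)
    (hy : {k | b < f (shiftZ (c + k) (chiD D))} ∈ y) :
    ¬ ∀ w ∈ W, (translates D (-(w + c)) ∈ x ↔ translates D (-(w + c)) ∈ y) := fun hxy => by
  obtain ⟨k, hk, k', hk', heq⟩ := exists_mem_mem_forall_shiftZ_eq D hxy hx hy
  have hdist := hW _ (shiftZ_chiD_mem_XD D _) _ (shiftZ_chiD_mem_XD D _) heq
  rw [Real.dist_eq, abs_lt] at hdist
  have h₁ : f (shiftZ (c + k) (chiD D)) < a := hk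
  have h₂ : b < f (shiftZ (c + k') (chiD D)) := hk'
  linarith

theorem tame_of_exists_countable_traces
    (h : ∀ L : Set ℤ, L.Infinite → ∃ K ⊆ L, K.Infinite ∧ (traces (translates D) K).Countable)
    (f : (ℤ → Bool) → ℝ) (hf : ContinuousOn f (XD D)) :
    ¬ ∃ m : ℕ → ℤ, IsIndependentSeqOn (XD D) fun n ω => f (shiftZ (m n) ω) := by
  rintro ⟨m, hind⟩
  have hm : Injective m := fun n n' hnn' => hind.injective (by simp only [hnn'])
  obtain ⟨a, b, hab, hpat⟩ := hind.of_closure fun n =>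
    hf.comp (continuous_shiftZ _).continuousOn (mapsTo_shiftZ_XD D _)
  obtain ⟨W, hW⟩ := (isClosed_closure.isCompact.uniformContinuousOn_of_continuous hf)
    |>.exists_finset_forall_dist_lt (sub_pos.2 hab)
  obtain ⟨N, hN, hNc⟩ := exists_infinite_countable_traces_biUnion h
    (e := fun w n => -(w + m n)) (fun w a b hab => hm (by simpa using hab)) W
  set u := Nat.nth (· ∈ N)
  have hu : Injective u := (Nat.nth_strictMono hN).injective
  choose x hxa hxb using Ultrafilter.exists_forall_mem_of_independent
    (A := fun i => {k | f (shiftZ (m (u i) + k) (chiD D)) < a})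
    (B := fun i => {k | b < f (shiftZ (m (u i) + k) (chiD D))}) fun P Q hPQ => by
      obtain ⟨_, ⟨⟨k, rfl⟩, hP⟩, hQ⟩ :=
        hpat (P.image u) (Q.image u) ((Finset.disjoint_image hu).2 hPQ)
      refine ⟨k, mem_iInter₂.2 fun i hi => ?_, mem_iInter₂.2 fun i hi => ?_⟩
      · simpa [shiftZ_shiftZ] using mem_iInter₂.1 hP (u i) (Finset.mem_image_of_mem u hi)
      · simpa [shiftZ_shiftZ] using mem_iInter₂.1 hQ (u i) (Finset.mem_image_of_mem u hi)
  obtain ⟨S, S', i, hiS, hiS', hxx⟩ :=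
    exists_mem_notMem_eq_of_countable_range (hNc.mono (range_comp_subset_range x _))
  exact not_forall_translates_mem_iff D hW (hxa S i hiS) (hxb S' i hiS') fun w hw =>
    and_congr_right_iff.1 (Set.ext_iff.1 hxx _)
      (mem_iUnion₂.2 ⟨w, hw, u i, Nat.nth_mem_of_infinite hN i, rfl⟩)

end Subshift

theorem stmt6 (D : Set ℤ) :
    -- (1) the ℤ-system `X_D` is tame
    (∀ f : (ℤ → Bool) → ℝ, ContinuousOn f (XD D) →
      ¬ ∃ m : ℕ → ℤ, IsIndependentSeqOn (XD D) fun n ω => f (shiftZ (m n) ω)) ↔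
    -- (2) for every infinite `L ⊆ ℤ` there are an infinite `K ⊆ L` and a countable
    -- set `Y` of ultrafilters on `ℤ` such that every ultrafilter `x` on `ℤ` agrees with
    -- some `y ∈ Y` about membership of `n + D` for all `n ∈ K`
    (∀ L : Set ℤ, L.Infinite → ∃ K ⊆ L, K.Infinite ∧
      ∃ Y : Set (Ultrafilter ℤ), Y.Countable ∧
        ∀ x : Ultrafilter ℤ, ∃ y ∈ Y, ∀ n ∈ K,
          ((fun d => n + d) '' D ∈ x ↔ (fun d => n + d) '' D ∈ y)) := by
  constructor
  · intro htame L hL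
    obtain ⟨K, hKL, hK, hKc⟩ := exists_countable_traces_of_tame D htame hL
    exact ⟨K, hKL, hK, countable_traces_iff.1 hKc⟩
  · intro h f hf
    refine tame_of_exists_countable_traces D (fun L hL => ?_) f hf
    obtain ⟨K, hKL, hK, hKc⟩ := h L hL
    exact ⟨K, hKL, hK, countable_traces_iff.2 hKc⟩
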